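/- arXiv:0801.0465 — 2 statements merged into one kernel-verified Lean document; each statement's English description precedes it below -/
import Mathlib

section
/- Let λ and μ be r-multipartitions such that μ is obtained from λ by adding one node α = (i,j,s), and set c := u_s·q^{2(j−i)}. Then in the field F(y) of rational functions: ∏_{β ∈ AR(μ)} (y − c_μ(β)^{-1})/(y − c_μ(β)) = ∏_{β ∈ AR(λ)} (y − c_λ(β)^{-1})/(y − c_λ(β)) · (y − c)²/(y − c^{-1})² · ((y − q^{-2}c^{-1})·(y − q²c^{-1}))/((y − q^{-2}c)·(y − q²c)), where AR(ν) denotes the set of all addable and removable nodes of the multipartition ν. -/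
/-- A partition: a weakly decreasing sequence of non-negative integers that is
eventually zero (rows are indexed from `0`, `part i` = length of row `i`). -/
structure PartitionSeq where
  part : ℕ → ℕ
  antitone : Antitone part
  eventually_zero : ∃ N, ∀ i, N ≤ i → part i = 0

/-- `(s, i)` (component `s`, row `i`, zero-based) is an addable node of `lam`. -/
def AddableAt {r : ℕ} (lam : Fin r → PartitionSeq) (p : Fin r × ℕ) : Prop :=
  p.2 = 0 ∨ (lam p.1).part p.2 < (lam p.1).part (p.2 - 1)

/-- `(s, i)` is a removable node of `lam`. -/
def RemovableAt {r : ℕ} (lam : Fin r → PartitionSeq) (p : Fin r × ℕ) : Prop :=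
  (lam p.1).part (p.2 + 1) < (lam p.1).part p.2

/-- `mu` is obtained from `lam` by adding one box in row `i` (zero-based) of
component `s`. -/
def AddBoxAt {r : ℕ} (lam mu : Fin r → PartitionSeq) (s : Fin r) (i : ℕ) : Prop :=
  (mu s).part i = (lam s).part i + 1 ∧
  (∀ i', i' ≠ i → (mu s).part i' = (lam s).part i') ∧
  (∀ s', s' ≠ s → mu s' = lam s')

/-- Content of an addable node `(s,i)` of `lam`: `u_s·q^{2(j−i)}` where the (1-based)
node is `(i+1, lam s |>.part i + 1, s)`. -/
noncomputable def cAdd {F : Type*} [Field F] {r : ℕ} (q : F) (u : Fin r → F)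
    (lam : Fin r → PartitionSeq) (p : Fin r × ℕ) : F :=
  u p.1 * q ^ (2 * (((lam p.1).part p.2 : ℤ) - (p.2 : ℤ)))

/-- Content of a removable node `(s,i)` of `lam`: `u_s⁻¹·q^{−2(j−i)}` where the (1-based)
node is `(i+1, lam s |>.part i, s)`. -/
noncomputable def cRem {F : Type*} [Field F] {r : ℕ} (q : F) (u : Fin r → F)
    (lam : Fin r → PartitionSeq) (p : Fin r × ℕ) : F :=
  (u p.1)⁻¹ * q ^ (-2 * (((lam p.1).part p.2 : ℤ) - 1 - (p.2 : ℤ)))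

/-- `∏_{β ∈ AR(lam)} (y − c_lam(β)⁻¹)/(y − c_lam(β))` in the rational function field
`F(y)`, `AR(lam)` being the set of all addable and removable nodes of `lam`. -/
noncomputable def ARProd {F : Type*} [Field F] {r : ℕ} (q : F) (u : Fin r → F)
    (lam : Fin r → PartitionSeq) : RatFunc F :=
  (∏ᶠ (p : Fin r × ℕ) (_ : AddableAt lam p),
      (RatFunc.X - RatFunc.C ((cAdd q u lam p)⁻¹)) /
        (RatFunc.X - RatFunc.C (cAdd q u lam p))) *
  (∏ᶠ (p : Fin r × ℕ) (_ : RemovableAt lam p),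
      (RatFunc.X - RatFunc.C ((cRem q u lam p)⁻¹)) /
        (RatFunc.X - RatFunc.C (cRem q u lam p)))

namespace Stmt14Aux

open Set Function

variable {F : Type*} [Field F] {r : ℕ}

lemma X_sub_C_ne (a : F) : (RatFunc.X - RatFunc.C a) ≠ 0 := by
  rw [← RatFunc.algebraMap_X, ← RatFunc.algebraMap_C, ← map_sub]
  exact RatFunc.algebraMap_ne_zero (Polynomial.X_sub_C_ne_zero a)

noncomputable def g (c : F) : RatFunc F :=
  (RatFunc.X - RatFunc.C c⁻¹) / (RatFunc.X - RatFunc.C c)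

lemma g_ne (c : F) : g c ≠ 0 := div_ne_zero (X_sub_C_ne _) (X_sub_C_ne _)

lemma g_inv (c : F) : g c⁻¹ = (g c)⁻¹ := by
  rw [g, g, inv_inv, inv_div]

noncomputable def FA (q : F) (u : Fin r → F) (lam : Fin r → PartitionSeq) :
    Fin r × ℕ → RatFunc F :=
  mulIndicator {p | AddableAt lam p} fun p => g (cAdd q u lam p)

noncomputable def FR (q : F) (u : Fin r → F) (lam : Fin r → PartitionSeq) :
    Fin r × ℕ → RatFunc F :=
  mulIndicator {p | RemovableAt lam p} fun p => g (cRem q u lam p)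

lemma FA_ne (q : F) (u : Fin r → F) (lam : Fin r → PartitionSeq) (p : Fin r × ℕ) :
    FA q u lam p ≠ 0 := by
  unfold FA
  by_cases h : p ∈ {p | AddableAt lam p}
  · rw [mulIndicator_of_mem h]; exact g_ne _
  · rw [mulIndicator_of_notMem h]; exact one_ne_zero

lemma FR_ne (q : F) (u : Fin r → F) (lam : Fin r → PartitionSeq) (p : Fin r × ℕ) :
    FR q u lam p ≠ 0 := by
  unfold FR
  by_cases h : p ∈ {p | RemovableAt lam p}
  · rw [mulIndicator_of_mem h]; exact g_ne _
  · rw [mulIndicator_of_notMem h]; exact one_ne_zero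

lemma FA_of_mem {q : F} {u : Fin r → F} {lam : Fin r → PartitionSeq} {p : Fin r × ℕ}
    (h : AddableAt lam p) : FA q u lam p = g (cAdd q u lam p) :=
  Set.mulIndicator_of_mem (show p ∈ {p | AddableAt lam p} from h) _

lemma FA_of_not {q : F} {u : Fin r → F} {lam : Fin r → PartitionSeq} {p : Fin r × ℕ}
    (h : ¬ AddableAt lam p) : FA q u lam p = 1 :=
  Set.mulIndicator_of_notMem (show p ∉ {p | AddableAt lam p} from h) _

lemma FR_of_mem {q : F} {u : Fin r → F} {lam : Fin r → PartitionSeq} {p : Fin r × ℕ}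
    (h : RemovableAt lam p) : FR q u lam p = g (cRem q u lam p) :=
  Set.mulIndicator_of_mem (show p ∈ {p | RemovableAt lam p} from h) _

lemma FR_of_not {q : F} {u : Fin r → F} {lam : Fin r → PartitionSeq} {p : Fin r × ℕ}
    (h : ¬ RemovableAt lam p) : FR q u lam p = 1 :=
  Set.mulIndicator_of_notMem (show p ∉ {p | RemovableAt lam p} from h) _

lemma finite_addable (lam : Fin r → PartitionSeq) :
    {p : Fin r × ℕ | AddableAt lam p}.Finite := by
  classical
  choose N hN using fun t => (lam t).eventually_zero
  refine Set.Finite.subset ((Set.finite_univ).prod (Set.finite_Iic (Finset.univ.sup N))) ?_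
  rintro ⟨t, j⟩ hj
  refine ⟨Set.mem_univ _, ?_⟩
  simp only [Set.mem_Iic]
  by_contra hlt
  push_neg at hlt
  have hNt : N t ≤ Finset.univ.sup N := Finset.le_sup (Finset.mem_univ t)
  rcases hj with h0 | h
  · simp only at h0; omega
  · have e1 : (lam t).part j = 0 := hN t j (by omega)
    have e2 : (lam t).part (j - 1) = 0 := hN t (j - 1) (by omega)
    simp only at h
    omega

lemma finite_removable (lam : Fin r → PartitionSeq) :
    {p : Fin r × ℕ | RemovableAt lam p}.Finite := by
  classical
  choose N hN using fun t => (lam t).eventually_zero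
  refine Set.Finite.subset ((Set.finite_univ).prod (Set.finite_Iic (Finset.univ.sup N))) ?_
  rintro ⟨t, j⟩ hj
  refine ⟨Set.mem_univ _, ?_⟩
  simp only [Set.mem_Iic]
  by_contra hlt
  push_neg at hlt
  have hNt : N t ≤ Finset.univ.sup N := Finset.le_sup (Finset.mem_univ t)
  have hj' : (lam t).part (j + 1) < (lam t).part j := hj
  have e1 : (lam t).part j = 0 := hN t j (by omega)
  omega

lemma FA_support_finite (q : F) (u : Fin r → F) (lam : Fin r → PartitionSeq) :
    (mulSupport (FA q u lam)).Finite :=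
  (finite_addable lam).subset mulSupport_mulIndicator_subset

lemma FR_support_finite (q : F) (u : Fin r → F) (lam : Fin r → PartitionSeq) :
    (mulSupport (FR q u lam)).Finite :=
  (finite_removable lam).subset mulSupport_mulIndicator_subset

lemma ARProd_eq (q : F) (u : Fin r → F) (lam : Fin r → PartitionSeq) :
    ARProd q u lam = ∏ᶠ p, FA q u lam p * FR q u lam p := by
  rw [finprod_mul_distrib (FA_support_finite q u lam) (FR_support_finite q u lam)]
  rw [ARProd]
  congr 1
  · exact finprod_mem_def {p | AddableAt lam p} fun p => g (cAdd q u lam p)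
  · exact finprod_mem_def {p | RemovableAt lam p} fun p => g (cRem q u lam p)

lemma split_T (f : Fin r × ℕ → RatFunc F) (hf : (mulSupport f).Finite)
    (T : Finset (Fin r × ℕ)) :
    ∏ᶠ p, f p = (∏ p ∈ T, f p) * ∏ᶠ p ∈ (↑T : Set (Fin r × ℕ))ᶜ, f p := by
  rw [← finprod_mem_univ f, ← Set.union_compl_self (↑T : Set (Fin r × ℕ)),
    finprod_mem_union' disjoint_compl_right (hf.subset Set.inter_subset_right)
      (hf.subset Set.inter_subset_right), finprod_mem_coe_finset]


lemma FA_congr {q : F} {u : Fin r → F} {lam mu : Fin r → PartitionSeq} (p : Fin r × ℕ)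
    (h0 : (mu p.1).part p.2 = (lam p.1).part p.2)
    (h1 : (mu p.1).part (p.2 - 1) = (lam p.1).part (p.2 - 1)) :
    FA q u mu p = FA q u lam p := by
  have hA : AddableAt mu p ↔ AddableAt lam p := by unfold AddableAt; rw [h0, h1]
  have hc : cAdd q u mu p = cAdd q u lam p := by unfold cAdd; rw [h0]
  by_cases h : AddableAt lam p
  · rw [FA_of_mem (hA.mpr h), FA_of_mem h, hc]
  · rw [FA_of_not (fun hh => h (hA.mp hh)), FA_of_not h]

lemma FR_congr {q : F} {u : Fin r → F} {lam mu : Fin r → PartitionSeq} (p : Fin r × ℕ)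
    (h0 : (mu p.1).part p.2 = (lam p.1).part p.2)
    (h2 : (mu p.1).part (p.2 + 1) = (lam p.1).part (p.2 + 1)) :
    FR q u mu p = FR q u lam p := by
  have hR : RemovableAt mu p ↔ RemovableAt lam p := by unfold RemovableAt; rw [h0, h2]
  have hc : cRem q u mu p = cRem q u lam p := by unfold cRem; rw [h0]
  by_cases h : RemovableAt lam p
  · rw [FR_of_mem (hR.mpr h), FR_of_mem h, hc]
  · rw [FR_of_not (fun hh => h (hR.mp hh)), FR_of_not h]

lemma key {q : F} {u : Fin r → F} (hq : q ≠ 0)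
    (lam mu : Fin r → PartitionSeq) (s : Fin r) (i : ℕ)
    (hadd : AddBoxAt lam mu s i) :
    ARProd q u mu = ARProd q u lam *
      (g ((cAdd q u lam (s, i))⁻¹) * (g (cAdd q u lam (s, i)))⁻¹ *
        g (cAdd q u lam (s, i) * q ^ (2 : ℤ)) *
        g (cAdd q u lam (s, i) * q ^ (-2 : ℤ))) := by
  classical
  obtain ⟨hmi, hmj, hms⟩ := hadd
  set c : F := cAdd q u lam (s, i) with hc
  set T : Finset (Fin r × ℕ) := {(s, i - 1), (s, i), (s, i + 1)} with hT
  -- off-T congruence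
  have hoff : ∀ p ∈ (↑T : Set (Fin r × ℕ))ᶜ,
      FA q u mu p * FR q u mu p = FA q u lam p * FR q u lam p := by
    rintro ⟨t, j⟩ hp
    simp only [hT, Set.mem_compl_iff, Finset.coe_insert, Set.mem_insert_iff,
      Finset.coe_singleton, Set.mem_singleton_iff, not_or, Prod.mk.injEq, not_and] at hp
    obtain ⟨hp1, hp2, hp3⟩ := hp
    by_cases hts : t = s
    · subst hts
      have hj1 : j ≠ i - 1 := hp1 rfl
      have hj2 : j ≠ i := hp2 rfl
      have hj3 : j ≠ i + 1 := hp3 rfl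
      have h0 : (mu t).part j = (lam t).part j := hmj j hj2
      have h1 : (mu t).part (j - 1) = (lam t).part (j - 1) := hmj _ (by omega)
      have h2 : (mu t).part (j + 1) = (lam t).part (j + 1) := hmj _ (by omega)
      rw [FA_congr (t, j) h0 h1, FR_congr (t, j) h0 h2]
    · have hmt : mu t = lam t := hms t hts
      have h0 : (mu t).part j = (lam t).part j := by rw [hmt]
      have h1 : (mu t).part (j - 1) = (lam t).part (j - 1) := by rw [hmt]
      have h2 : (mu t).part (j + 1) = (lam t).part (j + 1) := by rw [hmt]
      rw [FA_congr (t, j) h0 h1, FR_congr (t, j) h0 h2]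
  have hfmu : (mulSupport fun p => FA q u mu p * FR q u mu p).Finite :=
    Set.Finite.subset ((FA_support_finite q u mu).union (FR_support_finite q u mu))
      (mulSupport_mul _ _)
  have hflam : (mulSupport fun p => FA q u lam p * FR q u lam p).Finite :=
    Set.Finite.subset ((FA_support_finite q u lam).union (FR_support_finite q u lam))
      (mulSupport_mul _ _)
  rw [ARProd_eq q u mu, ARProd_eq q u lam, split_T _ hfmu T, split_T _ hflam T,
    finprod_mem_congr rfl hoff]
  have hmain : (∏ p ∈ T, FA q u mu p * FR q u mu p) =
      (∏ p ∈ T, FA q u lam p * FR q u lam p) *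
      (g (c⁻¹) * (g c)⁻¹ * g (c * q ^ (2 : ℤ)) * g (c * q ^ (-2 : ℤ))) := by
    have hqe : ∀ m n : ℤ, m = n → q ^ m = q ^ n := fun m n h => by rw [h]
    have hai : (lam s).part (i + 1) ≤ (lam s).part i := (lam s).antitone (Nat.le_succ i)
    have hlt : i ≠ 0 → (lam s).part i < (lam s).part (i - 1) := by
      intro h0
      have h1 : (mu s).part i ≤ (mu s).part (i - 1) := (mu s).antitone (Nat.sub_le i 1)
      rw [hmi, hmj (i - 1) (by omega)] at h1
      omega
    have E1 : cAdd q u mu (s, i) = c * q ^ (2 : ℤ) := by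
      rw [hc]
      show u s * q ^ (2 * (((mu s).part i : ℤ) - (i : ℤ))) =
        u s * q ^ (2 * (((lam s).part i : ℤ) - (i : ℤ))) * q ^ (2 : ℤ)
      rw [hmi, mul_assoc, ← zpow_add₀ hq]
      congr 1
      exact hqe _ _ (by push_cast; ring)
    have E2 : cRem q u mu (s, i) = c⁻¹ := by
      rw [hc]
      show (u s)⁻¹ * q ^ (-2 * (((mu s).part i : ℤ) - 1 - (i : ℤ))) =
        (u s * q ^ (2 * (((lam s).part i : ℤ) - (i : ℤ))))⁻¹
      rw [hmi, mul_inv, ← zpow_neg]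
      congr 1
      exact hqe _ _ (by push_cast; ring)
    have E3 : cRem q u lam (s, i) = (c * q ^ (-2 : ℤ))⁻¹ := by
      rw [hc]
      show (u s)⁻¹ * q ^ (-2 * (((lam s).part i : ℤ) - 1 - (i : ℤ))) =
        (u s * q ^ (2 * (((lam s).part i : ℤ) - (i : ℤ))) * q ^ (-2 : ℤ))⁻¹
      rw [mul_inv, mul_inv, ← zpow_neg, ← zpow_neg, mul_assoc, ← zpow_add₀ hq]
      congr 1
      exact hqe _ _ (by push_cast; ring)
    have P2 : RemovableAt mu (s, i) := by
      show (mu s).part (i + 1) < (mu s).part i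
      rw [hmi, hmj (i + 1) (by omega)]
      omega
    have P3 : AddableAt mu (s, i + 1) := by
      refine Or.inr ?_
      show (mu s).part (i + 1) < (mu s).part i
      rw [hmi, hmj (i + 1) (by omega)]
      omega
    have E5 : cAdd q u mu (s, i + 1) = cAdd q u lam (s, i + 1) := by
      show u s * q ^ (2 * (((mu s).part (i + 1) : ℤ) - ((i + 1 : ℕ) : ℤ))) =
        u s * q ^ (2 * (((lam s).part (i + 1) : ℤ) - ((i + 1 : ℕ) : ℤ)))
      rw [hmj (i + 1) (by omega)]
    rcases Nat.eq_zero_or_pos i with hi0 | hi1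
    · -- i = 0
      subst hi0
      have hT' : T = insert ((s, 0) : Fin r × ℕ) {(s, 1)} := by
        rw [hT, show (0 : ℕ) - 1 = 0 from rfl, show (0 : ℕ) + 1 = 1 from rfl,
          Finset.insert_idem]
      have hne : ((s, 0) : Fin r × ℕ) ∉ ({(s, 1)} : Finset (Fin r × ℕ)) := by
        simp
      simp only [zero_add] at P3 E5 hai
      simp only [hT', Finset.prod_insert hne, Finset.prod_singleton]
      have P1 : AddableAt lam (s, 0) := Or.inl rfl
      have P1m : AddableAt mu (s, 0) := Or.inl rfl
      rw [FA_of_mem P1m, E1, FR_of_mem P2, E2, FA_of_mem P1,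
        FR_congr (s, 1) (hmj 1 (by omega)) (hmj 2 (by omega)),
        FA_of_mem P3, E5]
      by_cases hB : (lam s).part 1 < (lam s).part 0
      · have PB : RemovableAt lam (s, 0) := hB
        have PB' : AddableAt lam (s, 1) := Or.inr hB
        rw [FR_of_mem PB, E3, FA_of_mem PB', g_inv, g_inv (c * q ^ (-2 : ℤ))]
        rw [← hc]
        field_simp [g_ne, FA_ne, FR_ne]
        try ring
      · have hae : (lam s).part 1 = (lam s).part 0 := by omega
        have PB' : ¬ AddableAt lam (s, 1) := by
          rintro (h | h)
          · exact absurd h (by omega)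
          · exact hB h
        have E4 : cAdd q u lam (s, 1) = c * q ^ (-2 : ℤ) := by
          rw [hc]
          show u s * q ^ (2 * (((lam s).part 1 : ℤ) - ((1 : ℕ) : ℤ))) =
            u s * q ^ (2 * (((lam s).part 0 : ℤ) - ((0 : ℕ) : ℤ))) * q ^ (-2 : ℤ)
          rw [hae, mul_assoc, ← zpow_add₀ hq]
          congr 1
          exact hqe _ _ (by push_cast; ring)
        rw [FR_of_not (show ¬ RemovableAt lam (s, 0) from fun h => hB h),
          FA_of_not PB', E4, g_inv]
        rw [← hc]
        field_simp [g_ne, FA_ne, FR_ne]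
        try ring
    · -- i ≥ 1
      have P1 : AddableAt lam (s, i) := Or.inr (hlt (by omega))
      have P4 : RemovableAt lam (s, i - 1) := by
        show (lam s).part (i - 1 + 1) < (lam s).part (i - 1)
        rw [show i - 1 + 1 = i from by omega]
        exact hlt (by omega)
      have E7 : cRem q u mu (s, i - 1) = cRem q u lam (s, i - 1) := by
        show (u s)⁻¹ * q ^ (-2 * (((mu s).part (i - 1) : ℤ) - 1 - ((i - 1 : ℕ) : ℤ))) =
          (u s)⁻¹ * q ^ (-2 * (((lam s).part (i - 1) : ℤ) - 1 - ((i - 1 : ℕ) : ℤ)))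
        rw [hmj (i - 1) (by omega)]
      have hne1 : ((s, i - 1) : Fin r × ℕ) ∉ ({(s, i), (s, i + 1)} : Finset (Fin r × ℕ)) := by
        simp only [Finset.mem_insert, Finset.mem_singleton, Prod.mk.injEq, not_or, not_and]
        constructor
        · intro _; omega
        · intro _; omega
      have hne2 : ((s, i) : Fin r × ℕ) ∉ ({(s, i + 1)} : Finset (Fin r × ℕ)) := by
        simp only [Finset.mem_singleton, Prod.mk.injEq, not_and]
        intro _; omega
      simp only [hT, Finset.prod_insert hne1, Finset.prod_insert hne2, Finset.prod_singleton]
      rw [FA_congr (s, i - 1) (hmj (i - 1) (by omega)) (hmj (i - 1 - 1) (by omega)),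
        FR_congr (s, i + 1) (hmj (i + 1) (by omega)) (hmj (i + 2) (by omega)),
        FA_of_mem P3, E5, FR_of_mem P2, E2, FA_of_mem P1]
      by_cases hA : (lam s).part i + 1 < (lam s).part (i - 1)
      · have hRm : RemovableAt mu (s, i - 1) := by
          show (mu s).part (i - 1 + 1) < (mu s).part (i - 1)
          rw [show i - 1 + 1 = i from by omega, hmi, hmj (i - 1) (by omega)]
          exact hA
        have hAm : AddableAt mu (s, i) := by
          refine Or.inr ?_
          show (mu s).part i < (mu s).part (i - 1)
          rw [hmi, hmj (i - 1) (by omega)]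
          exact hA
        rw [FR_of_mem hRm, E7, FA_of_mem hAm, E1, FR_of_mem P4]
        by_cases hB : (lam s).part (i + 1) < (lam s).part i
        · have PB : RemovableAt lam (s, i) := hB
          have PB' : AddableAt lam (s, i + 1) := Or.inr hB
          rw [FR_of_mem PB, E3, FA_of_mem PB', g_inv, g_inv (c * q ^ (-2 : ℤ))]
          rw [← hc]
          field_simp [g_ne, FA_ne, FR_ne]
          try ring
        · have hae : (lam s).part (i + 1) = (lam s).part i := by omega
          have PB' : ¬ AddableAt lam (s, i + 1) := by
            rintro (h | h)
            · exact absurd h (by omega)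
            · exact hB h
          have E4 : cAdd q u lam (s, i + 1) = c * q ^ (-2 : ℤ) := by
            rw [hc]
            show u s * q ^ (2 * (((lam s).part (i + 1) : ℤ) - ((i + 1 : ℕ) : ℤ))) =
              u s * q ^ (2 * (((lam s).part i : ℤ) - (i : ℤ))) * q ^ (-2 : ℤ)
            rw [hae, mul_assoc, ← zpow_add₀ hq]
            congr 1
            exact hqe _ _ (by push_cast; ring)
          rw [FR_of_not (show ¬ RemovableAt lam (s, i) from hB), FA_of_not PB', E4, g_inv]
          rw [← hc]
          field_simp [g_ne, FA_ne, FR_ne]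
          try ring
      · have heq : (lam s).part (i - 1) = (lam s).part i + 1 := by
          have := hlt (by omega); omega
        have hRm : ¬ RemovableAt mu (s, i - 1) := by
          show ¬ (mu s).part (i - 1 + 1) < (mu s).part (i - 1)
          rw [show i - 1 + 1 = i from by omega, hmi, hmj (i - 1) (by omega)]
          omega
        have hAm : ¬ AddableAt mu (s, i) := by
          rintro (h | h)
          · exact absurd h (by omega)
          · rw [hmi, hmj (i - 1) (by omega)] at h
            omega
        have E6 : cRem q u lam (s, i - 1) = (c * q ^ (2 : ℤ))⁻¹ := by
          rw [hc]
          show (u s)⁻¹ * q ^ (-2 * (((lam s).part (i - 1) : ℤ) - 1 - ((i - 1 : ℕ) : ℤ))) =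
            (u s * q ^ (2 * (((lam s).part i : ℤ) - (i : ℤ))) * q ^ (2 : ℤ))⁻¹
          rw [heq, mul_inv, mul_inv, ← zpow_neg, ← zpow_neg, mul_assoc, ← zpow_add₀ hq]
          congr 1
          exact hqe _ _ (by push_cast [Nat.cast_sub (by omega : 1 ≤ i)]; ring)
        rw [FR_of_not hRm, FA_of_not hAm, FR_of_mem P4, E6]
        by_cases hB : (lam s).part (i + 1) < (lam s).part i
        · have PB : RemovableAt lam (s, i) := hB
          have PB' : AddableAt lam (s, i + 1) := Or.inr hB
          rw [FR_of_mem PB, E3, FA_of_mem PB', g_inv, g_inv (c * q ^ (-2 : ℤ)),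
            g_inv (c * q ^ (2 : ℤ))]
          rw [← hc]
          field_simp [g_ne, FA_ne, FR_ne]
          try ring
        · have hae : (lam s).part (i + 1) = (lam s).part i := by omega
          have PB' : ¬ AddableAt lam (s, i + 1) := by
            rintro (h | h)
            · exact absurd h (by omega)
            · exact hB h
          have E4 : cAdd q u lam (s, i + 1) = c * q ^ (-2 : ℤ) := by
            rw [hc]
            show u s * q ^ (2 * (((lam s).part (i + 1) : ℤ) - ((i + 1 : ℕ) : ℤ))) =
              u s * q ^ (2 * (((lam s).part i : ℤ) - (i : ℤ))) * q ^ (-2 : ℤ)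
            rw [hae, mul_assoc, ← zpow_add₀ hq]
            congr 1
            exact hqe _ _ (by push_cast; ring)
          rw [FR_of_not (show ¬ RemovableAt lam (s, i) from hB), FA_of_not PB', E4, g_inv, g_inv (c * q ^ (2 : ℤ))]
          rw [← hc]
          field_simp [g_ne, FA_ne, FR_ne]
          try ring

  rw [hmain]; ring

end Stmt14Aux

/-- If `μ` is obtained from `λ` by adding one node `α = (i,j,s)` of
content `c = u_s·q^{2(j−i)}`, then in `F(y)`:
`∏_{β∈AR(μ)} (y − c_μ(β)⁻¹)/(y − c_μ(β)) = ∏_{β∈AR(λ)} (y − c_λ(β)⁻¹)/(y − c_λ(β))·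
(y − c)²/(y − c⁻¹)²·((y − q⁻²c⁻¹)(y − q²c⁻¹))/((y − q⁻²c)(y − q²c))`. -/
theorem stmt_14 {F : Type*} [Field F] {r : ℕ}
    (q : F) (u : Fin r → F) (hq : q ≠ 0) (hu : ∀ i, u i ≠ 0)
    (lam mu : Fin r → PartitionSeq) (s : Fin r) (i : ℕ)
    (hadd : AddBoxAt lam mu s i) :
    ARProd q u mu =
      ARProd q u lam *
        ((RatFunc.X - RatFunc.C (cAdd q u lam (s, i))) ^ 2 /
          (RatFunc.X - RatFunc.C ((cAdd q u lam (s, i))⁻¹)) ^ 2) *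
        (((RatFunc.X - RatFunc.C (q ^ (-2 : ℤ) * (cAdd q u lam (s, i))⁻¹)) *
            (RatFunc.X - RatFunc.C (q ^ (2 : ℤ) * (cAdd q u lam (s, i))⁻¹))) /
          ((RatFunc.X - RatFunc.C (q ^ (-2 : ℤ) * cAdd q u lam (s, i))) *
            (RatFunc.X - RatFunc.C (q ^ (2 : ℤ) * cAdd q u lam (s, i))))) := by
  rw [Stmt14Aux.key hq lam mu s i hadd]
  set c : F := cAdd q u lam (s, i) with hc
  have h : Stmt14Aux.g (c⁻¹) * (Stmt14Aux.g c)⁻¹ * Stmt14Aux.g (c * q ^ (2 : ℤ)) *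
      Stmt14Aux.g (c * q ^ (-2 : ℤ)) =
      ((RatFunc.X - RatFunc.C c) ^ 2 / (RatFunc.X - RatFunc.C (c⁻¹)) ^ 2) *
        (((RatFunc.X - RatFunc.C (q ^ (-2 : ℤ) * c⁻¹)) *
            (RatFunc.X - RatFunc.C (q ^ (2 : ℤ) * c⁻¹))) /
          ((RatFunc.X - RatFunc.C (q ^ (-2 : ℤ) * c)) *
            (RatFunc.X - RatFunc.C (q ^ (2 : ℤ) * c)))) := by
    have h1 : (c * q ^ (2 : ℤ))⁻¹ = q ^ (-2 : ℤ) * c⁻¹ := by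
      rw [mul_inv, ← zpow_neg, mul_comm]
    have h2 : (c * q ^ (-2 : ℤ))⁻¹ = q ^ (2 : ℤ) * c⁻¹ := by
      rw [mul_inv, ← zpow_neg, neg_neg, mul_comm]
    have h3 : c * q ^ (2 : ℤ) = q ^ (2 : ℤ) * c := mul_comm _ _
    have h4 : c * q ^ (-2 : ℤ) = q ^ (-2 : ℤ) * c := mul_comm _ _
    unfold Stmt14Aux.g
    rw [inv_inv, h1, h2, h3, h4]
    field_simp [Stmt14Aux.X_sub_C_ne]

  rw [h]
  ring
end

section
/- Let n ≥ 0 and 0 ≤ f ≤ ⌊n/2⌋ be integers. The number of 2f-tuples of positive integers (i_1, …, i_f, j_1, …, j_f) satisfying 1 ≤ i_f < i_{f−1} < ⋯ < i_1 ≤ n and i_k < j_k ≤ n − 2k + 2 for every 1 ≤ k ≤ f equals n!/((n − 2f)!·f!·2^f); equivalently, this number N satisfies N·(n − 2f)!·f!·2^f = n!. -/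
/-!
Split the tuples according to whether the smallest entry `i_f` equals `1`. If it does not,
subtracting `1` from every entry is a bijection onto the tuples for `n - 1`. If it does, `j_f`
ranges freely over `2, …, n - 2f + 2`, and the other entries, all `≥ 2`, form after the same shift
a tuple for `(n - 1, f - 1)`. Hence `N(n, f) = N(n - 1, f) + (n - 2f + 1) N(n - 1, f - 1)`, which is
also the recursion of `n (n - 1) ⋯ (n - 2f + 1) / (f! 2^f)`.
-/

open Set

theorem Nat.succ_descFactorial_succ_eq_add (n k : ℕ) :
    (n + 1).descFactorial (k + 1) = n.descFactorial (k + 1) + (k + 1) * n.descFactorial k := by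
  rw [Nat.succ_descFactorial_succ, Nat.descFactorial_succ, ← Nat.add_mul]
  rcases le_or_gt k n with h | h
  · congr 1; omega
  · simp [Nat.descFactorial_eq_zero_iff_lt.2 h]

def cosetTuples (n f : ℕ) : Set ((Fin f → ℕ) × (Fin f → ℕ)) :=
  {p | (∀ k l : Fin f, k < l → p.1 l < p.1 k) ∧
    (∀ k : Fin f, 1 ≤ p.1 k) ∧
    (∀ k : Fin f, p.1 k ≤ n) ∧
    (∀ k : Fin f, p.1 k < p.2 k) ∧
    (∀ k : Fin f, p.2 k ≤ n - 2 * (k : ℕ))}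

lemma cosetTuples_zero_right (n : ℕ) : cosetTuples n 0 = univ := by
  ext p; simp [cosetTuples]

lemma cosetTuples_zero_succ (f : ℕ) : cosetTuples 0 (f + 1) = ∅ := by
  ext p
  simp only [mem_empty_iff_false, iff_false]
  rintro ⟨-, h1, -, hab, hb⟩
  have := h1 0; have := hab 0; have := hb 0
  omega

section

variable {n f : ℕ}

lemma cosetTuples_finite : (cosetTuples n f).Finite := by
  refine ((Finite.pi' fun _ => finite_Iic n).prod (Finite.pi' fun _ => finite_Iic n)).subset ?_
  rintro p ⟨-, -, ha, hab, hb⟩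
  exact ⟨ha, fun k => (hb k).trans (Nat.sub_le _ _)⟩

lemma snoc_mem_cosetTuples_iff {a b : Fin f → ℕ} {x y : ℕ} :
    (Fin.snoc a x, Fin.snoc b y) ∈ cosetTuples n (f + 1) ↔
      (a, b) ∈ cosetTuples n f ∧ (∀ k, x < a k) ∧ 1 ≤ x ∧ x < y ∧ y ≤ n - 2 * f := by
  simp only [cosetTuples, mem_ofPred, Fin.forall_fin_succ', Fin.snoc_castSucc, Fin.snoc_last,
    Fin.castSucc_lt_castSucc_iff, Fin.castSucc_lt_last, Fin.val_castSucc, Fin.val_last,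
    lt_self_iff_false, not_lt.2 (Fin.le_last _), true_implies, false_implies, implies_true,
    and_true, forall_and]
  constructor
  · rintro ⟨⟨hdec, hx⟩, ⟨ha, hx1⟩, ⟨han, -⟩, ⟨hab, hxy⟩, hb, hy⟩
    exact ⟨⟨hdec, ha, han, hab, hb⟩, hx, hx1, hxy, hy⟩
  · rintro ⟨⟨hdec, ha, han, hab, hb⟩, hx, hx1, hxy, hy⟩
    exact ⟨⟨hdec, hx⟩, ⟨ha, hx1⟩, ⟨han, by omega⟩, ⟨hab, hxy⟩, hb, hy⟩

lemma image_add_one_cosetTuples :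
    (· + 1) '' cosetTuples n f = cosetTuples (n + 1) f ∩ {p | ∀ k, 2 ≤ p.1 k} := by
  ext p
  simp only [cosetTuples, mem_image, mem_inter_iff, mem_ofPred]
  constructor
  · rintro ⟨q, ⟨hdec, ha, han, hab, hb⟩, rfl⟩
    simp only [Prod.fst_add, Prod.snd_add, Prod.fst_one, Prod.snd_one, Pi.add_apply, Pi.one_apply]
    exact ⟨⟨fun k l hkl => by have := hdec k l hkl; omega, fun k => by omega,
      fun k => by have := han k; omega, fun k => by have := hab k; omega,
      fun k => by have := hb k; have := hab k; have := ha k; omega⟩,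
      fun k => by have := ha k; omega⟩
  · rintro ⟨⟨hdec, ha, han, hab, hb⟩, h2⟩
    refine ⟨p - 1, ?_, ?_⟩
    · simp only [Prod.fst_sub, Prod.snd_sub, Prod.fst_one, Prod.snd_one, Pi.sub_apply,
        Pi.one_apply]
      exact ⟨fun k l hkl => by have := hdec k l hkl; have := h2 l; omega,
        fun k => by have := h2 k; omega, fun k => by have := han k; omega,
        fun k => by have := hab k; have := h2 k; omega, fun k => by have := hb k; omega⟩
    · ext k
      · simp only [Prod.fst_add, Prod.fst_sub, Prod.fst_one, Pi.add_apply, Pi.sub_apply,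
          Pi.one_apply]
        have := h2 k
        omega
      · simp only [Prod.snd_add, Prod.snd_sub, Prod.snd_one, Pi.add_apply, Pi.sub_apply,
          Pi.one_apply]
        have := h2 k; have := hab k
        omega

lemma cosetTuples_sdiff :
    cosetTuples (n + 1) (f + 1) \ {p | ∀ k, 2 ≤ p.1 k} =
      (fun q => (Fin.snoc q.1.1 1, Fin.snoc q.1.2 q.2)) ''
        ((cosetTuples (n + 1) f ∩ {p | ∀ k, 2 ≤ p.1 k}) ×ˢ Icc 2 (n + 1 - 2 * f)) := by
  ext p
  obtain ⟨a, x, b, y, rfl⟩ : ∃ a x b y, p = (Fin.snoc a x, Fin.snoc b y) :=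
    ⟨Fin.init p.1, p.1 (Fin.last f), Fin.init p.2, p.2 (Fin.last f), by
      simp only [Fin.snoc_init_self]⟩
  simp only [mem_sdiff, mem_image, snoc_mem_cosetTuples_iff, Prod.exists, Prod.mk.injEq,
    Fin.snoc_inj, mem_prod, mem_inter_iff, mem_Icc, mem_ofPred, Fin.forall_fin_succ',
    Fin.snoc_castSucc, Fin.snoc_last]
  constructor
  · rintro ⟨⟨hab, hxa, hx, hxy, hy⟩, hnot⟩
    have hx1 : x = 1 := by
      by_contra hx1
      exact hnot ⟨fun k => by have := hxa k; omega, by omega⟩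
    subst hx1
    exact ⟨a, b, y, ⟨⟨hab, fun k => hxa k⟩, hxy, hy⟩, ⟨rfl, rfl⟩, rfl, rfl⟩
  · rintro ⟨a, b, y, ⟨⟨hab, ha⟩, hy2, hy⟩, ⟨rfl, rfl⟩, rfl, rfl⟩
    exact ⟨⟨hab, fun k => ha k, le_rfl, hy2, hy⟩, fun h => by omega⟩

end

lemma ncard_cosetTuples_succ_succ (n f : ℕ) :
    (cosetTuples (n + 1) (f + 1)).ncard =
      (cosetTuples n (f + 1)).ncard + (n - 2 * f) * (cosetTuples n f).ncard := by
  have hsnoc : Function.Injective fun q : ((Fin f → ℕ) × (Fin f → ℕ)) × ℕ =>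
      ((Fin.snoc q.1.1 1 : Fin (f + 1) → ℕ), (Fin.snoc q.1.2 q.2 : Fin (f + 1) → ℕ)) := by
    rintro ⟨⟨a, b⟩, y⟩ ⟨⟨a', b'⟩, y'⟩ h
    simp only [Prod.mk.injEq, Fin.snoc_inj] at h
    obtain ⟨⟨rfl, -⟩, rfl, rfl⟩ := h
    rfl
  rw [← ncard_inter_add_ncard_sdiff_eq_ncard _ {p | ∀ k, 2 ≤ p.1 k} cosetTuples_finite,
    ← image_add_one_cosetTuples, cosetTuples_sdiff, ncard_image_of_injective _ hsnoc, ncard_prod,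
    ← image_add_one_cosetTuples, ncard_image_of_injective _ (add_left_injective 1),
    ncard_image_of_injective _ (add_left_injective 1), ncard_Icc_nat,
    show n + 1 - 2 * f + 1 - 2 = n - 2 * f by omega, mul_comm]

open Nat in
theorem ncard_cosetTuples_mul (n f : ℕ) :
    (cosetTuples n f).ncard * (f ! * 2 ^ f) = n.descFactorial (2 * f) := by
  induction n generalizing f with
  | zero =>
    cases f with
    | zero => simp [cosetTuples_zero_right]
    | succ f =>
      rw [cosetTuples_zero_succ, ncard_empty, zero_mul, show 2 * (f + 1) = 2 * f + 1 + 1 by ring,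
        zero_descFactorial_succ]
  | succ n ih =>
    cases f with
    | zero => simp [cosetTuples_zero_right]
    | succ f =>
      calc (cosetTuples (n + 1) (f + 1)).ncard * ((f + 1)! * 2 ^ (f + 1))
          = (cosetTuples n (f + 1)).ncard * ((f + 1)! * 2 ^ (f + 1)) +
              (2 * f + 1 + 1) * (n - 2 * f) * ((cosetTuples n f).ncard * (f ! * 2 ^ f)) := by
            rw [ncard_cosetTuples_succ_succ, factorial_succ]; ring
        _ = n.descFactorial (2 * f + 1 + 1) +
              (2 * f + 1 + 1) * (n - 2 * f) * n.descFactorial (2 * f) := by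
            rw [ih, ih, show 2 * (f + 1) = 2 * f + 1 + 1 by ring]
        _ = (n + 1).descFactorial (2 * (f + 1)) := by
            rw [show 2 * (f + 1) = 2 * f + 1 + 1 by ring, Nat.succ_descFactorial_succ_eq_add,
              descFactorial_succ n (2 * f), mul_assoc]

/-- Let `n ≥ 0` and `0 ≤ f ≤ ⌊n/2⌋`.  The number `N` of `2f`-tuples of
positive integers `(i₁,…,i_f, j₁,…,j_f)` with `1 ≤ i_f < i_{f−1} < ⋯ < i₁ ≤ n` and
`i_k < j_k ≤ n − 2k + 2` for every `1 ≤ k ≤ f` satisfies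
`N·(n − 2f)!·f!·2^f = n!`.  (Here the tuple is encoded as a pair of functions
`a b : Fin f → ℕ`, `a k = i_{k+1}`, `b k = j_{k+1}`, `k` zero-based, so that the bound
`j_{k+1} ≤ n − 2(k+1) + 2` reads `b k ≤ n − 2k`.) -/
theorem stmt_15 (n f : ℕ) (hf : 2 * f ≤ n) :
    Nat.card {p : (Fin f → ℕ) × (Fin f → ℕ) //
        (∀ k l : Fin f, k < l → p.1 l < p.1 k) ∧
        (∀ k : Fin f, 1 ≤ p.1 k) ∧
        (∀ k : Fin f, p.1 k ≤ n) ∧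
        (∀ k : Fin f, p.1 k < p.2 k) ∧
        (∀ k : Fin f, p.2 k ≤ n - 2 * (k : ℕ))} *
      (Nat.factorial (n - 2 * f) * Nat.factorial f * 2 ^ f) = Nat.factorial n := by
  change Nat.card (cosetTuples n f) * _ = _
  rw [Nat.card_coe_set_eq, ← Nat.factorial_mul_descFactorial hf, ← ncard_cosetTuples_mul]
  ring
end
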